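/- arXiv:1909.10242 — 2 statements merged into one kernel-verified Lean document; each statement's English description precedes it below -/
import Mathlib

section
/- Let (V,q) be a finite weighted graph satisfying CD(0,n) for some finite n, and let (u_t)_{t≥0} solve ∂_t u_t = Δu_t + Γu_t with ‖Γu_0‖_∞ ≤ q_min/2. Then for all x, y ∈ V and all 0 < T₁ < T₂: u_{T₁}(x) − u_{T₂}(y) ≤ (n/2)·log(T₂/T₁) + 2·d(x,y)²/(q_min·(T₂ − T₁)), where d is the combinatorial graph distance. -/
open Finset Real

/-- Graph Laplacian on a finite weighted graph. -/
noncomputable def glap {V : Type*} [Fintype V] (q : V → V → ℝ) (f : V → ℝ) (x : V) : ℝ :=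
  ∑ y, q x y * (f y - f x)

/-- Carré du champ operator Γ(f,g). -/
noncomputable def gGammaBil {V : Type*} [Fintype V] (q : V → V → ℝ) (f g : V → ℝ) (x : V) : ℝ :=
  (1 / 2) * ∑ y, q x y * (f y - f x) * (g y - g x)

/-- Carré du champ Γf = Γ(f,f). -/
noncomputable def gGamma {V : Type*} [Fintype V] (q : V → V → ℝ) (f : V → ℝ) (x : V) : ℝ :=
  gGammaBil q f f x

/-- Iterated carré du champ Γ₂f = (ΔΓf − 2Γ(f,Δf))/2. -/
noncomputable def gGammaTwo {V : Type*} [Fintype V] (q : V → V → ℝ) (f : V → ℝ) (x : V) : ℝ :=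
  (glap q (gGamma q f) x - 2 * gGammaBil q f (glap q f) x) / 2

/-- The underlying simple graph of a weighted graph: x ∼ y iff q(x,y) > 0 or q(y,x) > 0. -/
def graphOf {V : Type*} [Fintype V] (q : V → V → ℝ) : SimpleGraph V where
  Adj x y := x ≠ y ∧ (0 < q x y ∨ 0 < q y x)
  symm := ⟨fun x y h => ⟨h.1.symm, h.2.symm⟩⟩
  loopless := ⟨fun x h => h.1 rfl⟩

/-!
Two maximum principles along the flow. A barrier `q_min/2 + δ e^{L(t-T)}` for `max Γu_t`
shows `Γu_t ≤ q_min/2` for all `t`: at a first contact point `x`, `Γ₂ ≥ 0` gives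
`2Γ(u, Δu) ≤ ΔΓu(x)`, while `Γu(x)` bounds the increments of `u` at `x`, so that
`∂ₜΓu(x) = 2Γ(u, Δu + Γu)(x)` grows at most linearly in `Γu(x) - q_min/2`. Once
`Γu ≤ q_min/2`, the increments of `u` along edges are at most `1`, and the barrier
`n/(2t) + δ` for `max(-Δu_t)` together with `CD(0,n)` yields the Li–Yau bound
`-Δu_t ≤ n/(2t)`.

Hence `t ↦ u_t(x) + (n/2) log t` is nondecreasing, with derivative at least `Γu_t(x)`.
Along an edge `x ∼ y` during `[a, b]`, a Riccati comparison finds a time `s` at which the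
jump `|u_s(y) - u_s(x)| ≤ √(2Γu_s/q_min)` is paid for by the growth of `u + (n/2) log t`,
up to `2/(q_min(b - a))`. Crossing the `d(x,y)` edges of a geodesic in equal time steps
gives `2 d(x,y)²/(q_min(T₂ - T₁))`.
-/

section GammaCalculus

variable {V : Type*} [Fintype V] {q : V → V → ℝ}

noncomputable def heatRHS (q : V → V → ℝ) (f : V → ℝ) : V → ℝ :=
  fun x => glap q f x + gGamma q f x

lemma glap_add (f g : V → ℝ) (x : V) :
    glap q (fun z => f z + g z) x = glap q f x + glap q g x := by
  simp only [glap, ← sum_add_distrib]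
  exact sum_congr rfl fun y _ => by ring

lemma gGammaBil_add_right (w f g : V → ℝ) (x : V) :
    gGammaBil q w (fun z => f z + g z) x = gGammaBil q w f x + gGammaBil q w g x := by
  simp only [gGammaBil, ← mul_add, ← sum_add_distrib]
  exact congrArg _ (sum_congr rfl fun y _ => by ring)

lemma two_mul_gGammaBil_glap (f : V → ℝ) (x : V) :
    2 * gGammaBil q f (glap q f) x = glap q (gGamma q f) x - 2 * gGammaTwo q f x := by
  unfold gGammaTwo; ring

lemma sum_mul_abs_sub_eq_neg_glap {f : V → ℝ} {x : V} (hmax : ∀ y, f y ≤ f x) :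
    ∑ y, q x y * |f y - f x| = -glap q f x := by
  rw [glap, ← sum_neg_distrib]
  exact sum_congr rfl fun y _ => by rw [abs_of_nonpos (sub_nonpos.2 (hmax y))]; ring

lemma sum_mul_abs_sub_eq_glap {f : V → ℝ} {x : V} (hmin : ∀ y, f x ≤ f y) :
    ∑ y, q x y * |f y - f x| = glap q f x :=
  sum_congr rfl fun y _ => by rw [abs_of_nonneg (sub_nonneg.2 (hmin y))]

variable (hq : ∀ x y, 0 ≤ q x y)
include hq

lemma mul_sq_sub_le_two_mul_gGamma (f : V → ℝ) (x y : V) :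
    q x y * (f y - f x) ^ 2 ≤ 2 * gGamma q f x := by
  have hterm : ∀ z ∈ univ, 0 ≤ q x z * (f z - f x) * (f z - f x) :=
    fun z _ => by rw [mul_assoc]; exact mul_nonneg (hq x z) (mul_self_nonneg _)
  have hsingle := single_le_sum hterm (mem_univ y)
  simp only [gGamma, gGammaBil]
  nlinarith

lemma gGamma_nonneg (f : V → ℝ) (x : V) : 0 ≤ gGamma q f x := by
  have hxx := mul_sq_sub_le_two_mul_gGamma hq f x x
  simp only [sub_self] at hxx
  linarith

lemma abs_sub_le_of_two_mul_gGamma_le {qmin R : ℝ} (hqmin_pos : 0 < qmin)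
    (hqmin : ∀ x y, 0 < q x y → qmin ≤ q x y) {f : V → ℝ} {x y : V} (hxy : 0 < q x y)
    (hR : 0 ≤ R) (hΓ : 2 * gGamma q f x ≤ qmin * R ^ 2) : |f y - f x| ≤ R := by
  refine abs_le_of_sq_le_sq ?_ hR
  have hedge := mul_sq_sub_le_two_mul_gGamma hq f x y
  have : qmin * (f y - f x) ^ 2 ≤ q x y * (f y - f x) ^ 2 :=
    mul_le_mul_of_nonneg_right (hqmin x y hxy) (sq_nonneg _)
  exact le_of_mul_le_mul_left (by linarith) hqmin_pos

lemma two_mul_abs_gGammaBil_le {w f : V → ℝ} {x : V} {β : ℝ}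
    (hw : ∀ y, 0 < q x y → |w y - w x| ≤ β) :
    2 * |gGammaBil q w f x| ≤ β * ∑ y, q x y * |f y - f x| := by
  have hterm : ∀ y ∈ univ, |q x y * (w y - w x) * (f y - f x)| ≤ β * (q x y * |f y - f x|) := by
    intro y _
    rw [abs_mul, abs_mul, abs_of_nonneg (hq x y)]
    rcases (hq x y).eq_or_lt with h | h
    · simp [← h]
    · calc q x y * |w y - w x| * |f y - f x| ≤ q x y * β * |f y - f x| := by
            gcongr; exact hw y h
        _ = β * (q x y * |f y - f x|) := by ring
  calc 2 * |gGammaBil q w f x| = |∑ y, q x y * (w y - w x) * (f y - f x)| := by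
        rw [gGammaBil, abs_mul, abs_of_pos (by norm_num : (0:ℝ) < 1 / 2)]; ring
    _ ≤ ∑ y, |q x y * (w y - w x) * (f y - f x)| := abs_sum_le_sum_abs _ _
    _ ≤ β * ∑ y, q x y * |f y - f x| := by rw [mul_sum]; exact sum_le_sum hterm

variable {qmin : ℝ} (hqmin_pos : 0 < qmin) (hqmin : ∀ x y, 0 < q x y → qmin ≤ q x y)
include hqmin_pos hqmin

lemma two_mul_gGammaBil_heatRHS_le {f : V → ℝ} {x : V} (hΓ₂ : 0 ≤ gGammaTwo q f x)
    (hmax : ∀ y, gGamma q f y ≤ gGamma q f x) (hc : qmin / 2 ≤ gGamma q f x) :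
    2 * gGammaBil q f (heatRHS q f) x
      ≤ (2 * gGamma q f x / qmin - 1) * (gGamma q f x * ∑ y, q x y) := by
  set M := gGamma q f x
  set R := 2 * M / qmin
  have hqR : qmin * R = 2 * M := by simp only [R]; field_simp
  have hR1 : 1 ≤ R := by rw [le_div_iff₀ hqmin_pos]; linarith
  have hjump : ∀ y, 0 < q x y → |f y - f x| ≤ R := fun y hy =>
    abs_sub_le_of_two_mul_gGamma_le hq hqmin_pos hqmin hy (by linarith) (by nlinarith)
  have hbil := two_mul_abs_gGammaBil_le hq hjump (f := gGamma q f)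
  rw [sum_mul_abs_sub_eq_neg_glap hmax] at hbil
  have hbil_abs := le_abs_self (gGammaBil q f (gGamma q f) x)
  have hA0 : 0 ≤ -glap q (gGamma q f) x := by
    rw [← sum_mul_abs_sub_eq_neg_glap hmax]
    exact sum_nonneg fun y _ => mul_nonneg (hq x y) (abs_nonneg _)
  have hAM : -glap q (gGamma q f) x ≤ M * ∑ y, q x y := by
    rw [glap, ← sum_neg_distrib, mul_sum]
    exact sum_le_sum fun y _ => by nlinarith [hq x y, gGamma_nonneg hq f y]
  calc 2 * gGammaBil q f (heatRHS q f) x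
      = (glap q (gGamma q f) x - 2 * gGammaTwo q f x) + 2 * gGammaBil q f (gGamma q f) x := by
        unfold heatRHS; rw [gGammaBil_add_right, mul_add, two_mul_gGammaBil_glap]
    _ ≤ (R - 1) * -glap q (gGamma q f) x := by linarith
    _ ≤ (R - 1) * (M * ∑ y, q x y) := by gcongr

lemma neg_glap_heatRHS_le {n : ℝ} {f : V → ℝ} {x : V}
    (hCD : 1 / n * glap q f x ^ 2 ≤ gGammaTwo q f x) (hΓ : gGamma q f x ≤ qmin / 2)
    (hmin : ∀ y, glap q f x ≤ glap q f y) :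
    -glap q (heatRHS q f) x ≤ -(2 / n * glap q f x ^ 2) := by
  have hjump : ∀ y, 0 < q x y → |f y - f x| ≤ 1 := fun y hy =>
    abs_sub_le_of_two_mul_gGamma_le hq hqmin_pos hqmin hy zero_le_one (by linarith)
  have hbil := two_mul_abs_gGammaBil_le hq hjump (f := glap q f)
  rw [one_mul, sum_mul_abs_sub_eq_glap hmin] at hbil
  have hΓ₂ := two_mul_gGammaBil_glap (q := q) f x
  have hbil_abs := neg_abs_le (gGammaBil q f (glap q f) x)
  have htwo : 2 / n * glap q f x ^ 2 = 2 * (1 / n * glap q f x ^ 2) := by ring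
  unfold heatRHS
  rw [glap_add]
  linarith

end GammaCalculus

section Derivatives

variable {V : Type*} [Fintype V] {q : V → V → ℝ} {u : ℝ → V → ℝ} {v : V → ℝ} {t : ℝ}

lemma hasDerivAt_glap (hu : ∀ y, HasDerivAt (fun s => u s y) (v y) t) (x : V) :
    HasDerivAt (fun s => glap q (u s) x) (glap q v x) t :=
  HasDerivAt.fun_sum fun y _ => ((hu y).sub (hu x)).const_mul _

lemma hasDerivAt_gGamma (hu : ∀ y, HasDerivAt (fun s => u s y) (v y) t) (x : V) :
    HasDerivAt (fun s => gGamma q (u s) x) (2 * gGammaBil q (u t) v x) t := by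
  have hd : ∀ y, HasDerivAt (fun s => u s y - u s x) (v y - v x) t := fun y => (hu y).sub (hu x)
  refine ((HasDerivAt.fun_sum fun y _ =>
    ((hd y).const_mul (q x y)).mul (hd y)).const_mul (1 / 2 : ℝ)).congr_deriv ?_
  simp only [gGammaBil, mul_sum]
  exact sum_congr rfl fun y _ => by ring

end Derivatives

section Barrier

open Set Filter Topology

variable {ι : Type*} [Finite ι] {a b : ℝ}

lemma exists_forall_le_of_continuousOn_Icc {ψ : ι → ℝ → ℝ}
    (hψ : ∀ i, ContinuousOn (ψ i) (Icc a b)) : ∃ B, ∀ t ∈ Icc a b, ∀ i, ψ i t ≤ B := by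
  choose B hB using fun i => isCompact_Icc.exists_bound_of_continuousOn (hψ i)
  exact ⟨⨆ i, B i, fun t ht i =>
    (le_abs_self _).trans ((hB i t ht).trans (le_ciSup (finite_range B).bddAbove i))⟩

theorem forall_lt_of_deriv_lt_at_contact {φ φ' : ℝ → ℝ} {ψ ψ' : ι → ℝ → ℝ}
    (hφ : ContinuousOn φ (Icc a b)) (hψ : ∀ i, ContinuousOn (ψ i) (Icc a b))
    (hφ' : ∀ t ∈ Ioc a b, HasDerivAt φ (φ' t) t)
    (hψ' : ∀ i, ∀ t ∈ Ioc a b, HasDerivAt (ψ i) (ψ' i t) t) (ha : ∀ i, ψ i a < φ a)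
    (hcontact : ∀ t ∈ Ioc a b, ∀ i, (∀ j, ψ j t ≤ φ t) → ψ i t = φ t → ψ' i t < φ' t) :
    ∀ t ∈ Icc a b, ∀ i, ψ i t < φ t := by
  by_contra! ⟨t₁, ht₁, i₁, h₁⟩
  set S := ⋃ i, {t ∈ Icc a b | φ t ≤ ψ i t}
  have hSc : IsClosed S := isClosed_iUnion_of_finite fun i => isClosed_Icc.isClosed_le hφ (hψ i)
  have hSb : BddBelow S := ⟨a, fun t ht => by obtain ⟨i, hi⟩ := mem_iUnion.1 ht; exact hi.1.1⟩
  set t₀ := sInf S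
  obtain ⟨i, ht₀, hi⟩ := mem_iUnion.1 (hSc.csInf_mem ⟨t₁, mem_iUnion.2 ⟨i₁, ht₁, h₁⟩⟩ hSb)
  have hbefore : ∀ s ∈ Ico a t₀, ∀ j, ψ j s < φ s := fun s hs j => by
    by_contra! h
    exact notMem_of_lt_csInf hs.2 hSb (mem_iUnion.2 ⟨j, ⟨hs.1, hs.2.le.trans ht₀.2⟩, h⟩)
  have hat₀ : a < t₀ := ht₀.1.lt_of_ne fun h => (ha i).not_ge (h ▸ hi)
  have hle : ∀ j, ψ j t₀ ≤ φ t₀ := fun j => by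
    have hcl : t₀ ∈ closure (Ico a t₀) := by rw [closure_Ico hat₀.ne]; exact ⟨hat₀.le, le_rfl⟩
    have hsub : Ico a t₀ ⊆ Icc a b := fun s hs => ⟨hs.1, hs.2.le.trans ht₀.2⟩
    exact ContinuousWithinAt.closure_le hcl (((hψ j).continuousWithinAt ht₀).mono hsub)
      ((hφ.continuousWithinAt ht₀).mono hsub) fun s hs => (hbefore s hs j).le
  have hlt := hcontact t₀ ⟨hat₀, ht₀.2⟩ i hle ((hle i).antisymm hi)
  -- `ψ i - φ` vanishes at `t₀` and is negative just before, so its derivative there is `≥ 0`.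
  have hF := ((hψ' i t₀ ⟨hat₀, ht₀.2⟩).sub (hφ' t₀ ⟨hat₀, ht₀.2⟩)).hasDerivWithinAt (s := Iio t₀)
  rw [hasDerivWithinAt_iff_tendsto_slope' Set.self_notMem_Iio] at hF
  refine hlt.not_ge (sub_nonneg.1 (ge_of_tendsto hF ?_))
  filter_upwards [Ioo_mem_nhdsLT hat₀] with s hs
  rw [slope_def_field]
  refine div_nonneg_of_nonpos ?_ (by linarith [hs.2])
  simp only [Pi.sub_apply]
  linarith [hbefore s ⟨hs.1.le, hs.2⟩ i, (hle i).antisymm hi]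

end Barrier

section Solution

open Set

variable {V : Type*} [Fintype V] {q : V → V → ℝ} {u : ℝ → V → ℝ}
  (hu : ∀ t ∈ Set.Ici (0 : ℝ), ∀ x, HasDerivWithinAt (fun s => u s x)
    (glap q (u t) x + gGamma q (u t) x) (Set.Ici 0) t)
include hu

lemma hasDerivAt_of_solution {t : ℝ} (ht : 0 < t) (x : V) :
    HasDerivAt (fun s => u s x) (heatRHS q (u t) x) t :=
  (hu t ht.le x).hasDerivAt (Ici_mem_nhds ht)

lemma continuousOn_gGamma_of_solution (x : V) :
    ContinuousOn (fun s => gGamma q (u s) x) (Ici 0) := by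
  have hcont : ∀ y, ContinuousOn (fun s => u s y) (Ici 0) := fun y t ht =>
    (hu t ht y).continuousWithinAt
  unfold gGamma gGammaBil
  fun_prop

lemma continuousOn_glap_of_solution (x : V) :
    ContinuousOn (fun s => glap q (u s) x) (Ici 0) := by
  have hcont : ∀ y, ContinuousOn (fun s => u s y) (Ici 0) := fun y t ht =>
    (hu t ht y).continuousWithinAt
  unfold glap
  fun_prop

variable {qmin n : ℝ} (hq : ∀ x y, 0 ≤ q x y) (hqmin_pos : 0 < qmin)
  (hqmin : ∀ x y, 0 < q x y → qmin ≤ q x y)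
  (hCD : ∀ f : V → ℝ, ∀ x, 1 / n * glap q f x ^ 2 ≤ gGammaTwo q f x)
  (h0 : ∀ x, gGamma q (u 0) x ≤ qmin / 2)
include hq hqmin_pos hqmin hCD h0

theorem gGamma_le_of_solution (hn : 0 < n) {T : ℝ} (hT : 0 ≤ T) (x : V) :
    gGamma q (u T) x ≤ qmin / 2 := by
  rcases hT.eq_or_lt with rfl | hT
  · exact h0 x
  set c := qmin / 2
  have hc : 0 < c := by positivity
  have hcont : ∀ z, ContinuousOn (fun s => gGamma q (u s) z) (Icc 0 T) := fun z =>
    (continuousOn_gGamma_of_solution hu z).mono Icc_subset_Ici_self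
  obtain ⟨C, hC⟩ := exists_forall_le_of_continuousOn_Icc
    (ψ := fun z s => gGamma q (u s) z * ∑ y, q z y) fun z => (hcont z).mul continuousOn_const
  set L := C / c + 1
  refine le_of_forall_pos_lt_add fun δ hδ => ?_
  -- The barrier `c + δ e^{L (s - T)}` grows at rate `L (φ - c)`, faster than `max Γu` above `c`.
  have hφ : ∀ s, HasDerivAt (fun s => c + δ * exp (L * (s - T))) (L * (δ * exp (L * (s - T)))) s :=
    fun s => ((((hasDerivAt_id s).sub_const T).const_mul L).exp.const_mul δ).const_add c
      |>.congr_deriv (by simp only [id]; ring)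
  have key := forall_lt_of_deriv_lt_at_contact (φ := fun s => c + δ * exp (L * (s - T)))
    (ψ := fun z s => gGamma q (u s) z)
    (ψ' := fun z s => 2 * gGammaBil q (u s) (heatRHS q (u s)) z)
    (fun s _ => (hφ s).continuousAt.continuousWithinAt) hcont (fun s _ => hφ s)
    (fun z s hs => hasDerivAt_gGamma (fun y => hasDerivAt_of_solution hu hs.1 y) z)
    (fun z => by linarith [h0 z, mul_pos hδ (exp_pos (L * (0 - T)))]) ?_
    T (right_mem_Icc.2 hT.le) x
  · simpa using key
  intro s hs z hall heq
  set M := gGamma q (u s) z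
  have hMc : M - c = δ * exp (L * (s - T)) := by rw [heq]; ring
  have hMc_pos : 0 < M - c := by rw [hMc]; positivity
  have hΓ₂ : 0 ≤ gGammaTwo q (u s) z :=
    (by positivity : (0 : ℝ) ≤ 1 / n * glap q (u s) z ^ 2).trans (hCD (u s) z)
  have hbound := two_mul_gGammaBil_heatRHS_le hq hqmin_pos hqmin hΓ₂
    (fun y => (hall y).trans heq.ge) (by change c ≤ M; linarith)
  have hratio : 2 * M / qmin - 1 = (M - c) / c := by simp only [c]; field_simp
  rw [hratio] at hbound
  calc 2 * gGammaBil q (u s) (heatRHS q (u s)) z ≤ (M - c) / c * C :=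
        hbound.trans (by gcongr; exact hC s ⟨hs.1.le, hs.2⟩ z)
    _ < L * (M - c) := by
        simp only [L]; field_simp; nlinarith
    _ = L * (δ * exp (L * (s - T))) := by rw [hMc]

theorem neg_glap_le_of_solution (hn : 0 < n) {T : ℝ} (hT : 0 < T) (x : V) :
    -glap q (u T) x ≤ n / (2 * T) := by
  have hcont : ∀ z, ContinuousOn (fun s => -glap q (u s) z) (Icc 0 T) := fun z =>
    ((continuousOn_glap_of_solution hu z).mono Icc_subset_Ici_self).neg
  obtain ⟨B, hB⟩ := exists_forall_le_of_continuousOn_Icc hcont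
  -- Start the comparison at a time `a` where the barrier `n / (2a)` already exceeds `B`.
  set a := min T (n / (2 * (|B| + 1)))
  have ha : 0 < a := lt_min hT (by positivity)
  have haB : B < n / (2 * a) := by
    have h := min_le_right T (n / (2 * (|B| + 1)))
    rw [le_div_iff₀ (by positivity)] at h
    rw [lt_div_iff₀ (by positivity)]
    nlinarith [le_abs_self B, abs_nonneg B]
  refine le_of_forall_pos_lt_add fun δ hδ => ?_
  have hφ : ∀ s, 0 < s → HasDerivAt (fun s => n / (2 * s) + δ) (-(n / (2 * s ^ 2))) s :=
    fun s hs => by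
      have e : (fun s : ℝ => n / (2 * s) + δ) = fun s => n / 2 * s⁻¹ + δ := by funext s; ring
      rw [e]
      exact ((hasDerivAt_inv hs.ne').const_mul (n / 2)).add_const δ |>.congr_deriv (by ring)
  have key := forall_lt_of_deriv_lt_at_contact (a := a) (φ := fun s => n / (2 * s) + δ)
    (ψ := fun z s => -glap q (u s) z) (ψ' := fun z s => -glap q (heatRHS q (u s)) z)
    (fun s hs => (hφ s (ha.trans_le hs.1)).continuousAt.continuousWithinAt)
    (fun z => (hcont z).mono (Icc_subset_Icc_left ha.le)) (fun s hs => hφ s (ha.trans hs.1))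
    (fun z s hs => (hasDerivAt_glap (fun y => hasDerivAt_of_solution hu (ha.trans hs.1) y) z).neg)
    (fun z => by linarith [hB a ⟨ha.le, min_le_left _ _⟩ z])
    ?_ T (right_mem_Icc.2 (min_le_left _ _)) x
  · simpa using key
  intro s hs z hall heq
  have hs0 : 0 < s := ha.trans hs.1
  have hbound := neg_glap_heatRHS_le hq hqmin_pos hqmin (hCD (u s) z)
    (gGamma_le_of_solution hu hq hqmin_pos hqmin hCD h0 hn hs0.le z)
    (fun y => by linarith [hall y])
  have hpos : 0 < n / (2 * s) := by positivity
  have hsq : (n / (2 * s)) ^ 2 < glap q (u s) z ^ 2 := by nlinarith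
  calc -glap q (heatRHS q (u s)) z ≤ -(2 / n * glap q (u s) z ^ 2) := hbound
    _ < -(2 / n * (n / (2 * s)) ^ 2) := by gcongr
    _ = -(n / (2 * s ^ 2)) := by field_simp

end Solution

section Riccati

open Set

variable {G G' g : ℝ → ℝ} {a b Q : ℝ}

theorem exists_two_mul_le_sq_of_le_deriv (hab : a < b) (hQ : 0 < Q)
    (hG : ∀ s ∈ Icc a b, HasDerivAt G (G' s) s) (hg₀ : ∀ s ∈ Icc a b, 0 ≤ g s)
    (hg : ∀ s ∈ Icc a b, g s ≤ G' s) :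
    ∃ s ∈ Icc a b, 2 * g s ≤ Q * (G s - G a + 2 / (Q * (b - a))) ^ 2 := by
  by_contra! h
  set K := 2 / (Q * (b - a))
  have hK : 0 < K := div_pos two_pos (mul_pos hQ (sub_pos.2 hab))
  have hmono : MonotoneOn G (Icc a b) :=
    monotoneOn_of_hasDerivWithinAt_nonneg (convex_Icc a b)
      (fun s hs => (hG s hs).continuousAt.continuousWithinAt)
      (fun s hs => (hG s (interior_subset hs)).hasDerivWithinAt)
      (fun s hs => (hg₀ s (interior_subset hs)).trans (hg s (interior_subset hs)))
  have hpos : ∀ s ∈ Icc a b, 0 < G s - G a + K := fun s hs => by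
    linarith [hmono (left_mem_Icc.2 hab.le) hs hs.1]
  have hderiv : ∀ s ∈ Icc a b, HasDerivAt (fun r => (G r - G a + K)⁻¹ + Q / 2 * r)
      (-G' s / (G s - G a + K) ^ 2 + Q / 2) s := fun s hs =>
    ((((hG s hs).sub_const (G a)).add_const K).inv (hpos s hs).ne').add
      ((hasDerivAt_id s).const_mul (Q / 2)) |>.congr_deriv (by ring)
  -- `1 / (G - G a + K) + Q s / 2` equals `Q b / 2` at `a`, exceeds it at `b`, and would
  -- be strictly decreasing if the claim failed everywhere.
  have hanti : StrictAntiOn (fun r => (G r - G a + K)⁻¹ + Q / 2 * r) (Icc a b) :=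
    strictAntiOn_of_hasDerivWithinAt_neg (convex_Icc a b)
      (fun s hs => (hderiv s hs).continuousAt.continuousWithinAt)
      (fun s hs => (hderiv s (interior_subset hs)).hasDerivWithinAt)
      (fun s hs => by
        replace hs := interior_subset hs
        have hlt : Q / 2 < G' s / (G s - G a + K) ^ 2 := by
          rw [lt_div_iff₀ (pow_pos (hpos s hs) 2)]; linarith [h s hs, hg s hs]
        rw [neg_div]; linarith)
  have hab' := hanti (left_mem_Icc.2 hab.le) (right_mem_Icc.2 hab.le) hab
  have hKinv : K⁻¹ = Q * (b - a) / 2 := inv_div _ _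
  simp only [sub_self, zero_add, hKinv] at hab'
  linarith [inv_pos.2 (hpos b (right_mem_Icc.2 hab.le))]

theorem exists_two_mul_le_sq_of_le_deriv' (hab : a < b) (hQ : 0 < Q)
    (hG : ∀ s ∈ Icc a b, HasDerivAt G (G' s) s) (hg₀ : ∀ s ∈ Icc a b, 0 ≤ g s)
    (hg : ∀ s ∈ Icc a b, g s ≤ G' s) :
    ∃ s ∈ Icc a b, 2 * g s ≤ Q * (G b - G s + 2 / (Q * (b - a))) ^ 2 := by
  have hrefl : ∀ r ∈ Icc a b, a + b - r ∈ Icc a b := fun r hr =>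
    ⟨by linarith [hr.2], by linarith [hr.1]⟩
  obtain ⟨r, hr, hle⟩ := exists_two_mul_le_sq_of_le_deriv (G := fun r => -G (a + b - r))
    (G' := fun r => G' (a + b - r)) (g := fun r => g (a + b - r)) hab hQ
    (fun r hr => ((hG _ (hrefl r hr)).comp r ((hasDerivAt_id r).const_sub (a + b))).neg
      |>.congr_deriv (by ring))
    (fun r hr => hg₀ _ (hrefl r hr)) (fun r hr => hg _ (hrefl r hr))
  refine ⟨a + b - r, hrefl r hr, ?_⟩
  convert hle using 4
  simp only [add_sub_cancel_left]
  ring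

end Riccati

section Harnack

open Set SimpleGraph

variable {V : Type*} [Fintype V] {q : V → V → ℝ} {u : ℝ → V → ℝ} {qmin n : ℝ}
  (hq : ∀ x y, 0 ≤ q x y)
  (hderiv : ∀ t, 0 < t → ∀ x, HasDerivAt (fun s => u s x) (heatRHS q (u t) x) t)
  (hLY : ∀ t, 0 < t → ∀ x, -glap q (u t) x ≤ n / (2 * t))

include hderiv in
lemma hasDerivAt_add_log {t : ℝ} (ht : 0 < t) (x : V) :
    HasDerivAt (fun s => u s x + n / 2 * log s) (heatRHS q (u t) x + n / 2 * t⁻¹) t :=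
  (hderiv t ht x).add ((hasDerivAt_log ht.ne').const_mul _)

include hLY in
lemma gGamma_le_heatRHS_add {t : ℝ} (ht : 0 < t) (x : V) :
    gGamma q (u t) x ≤ heatRHS q (u t) x + n / 2 * t⁻¹ := by
  have hLYx := hLY t ht x
  have e : n / (2 * t) = n / 2 * t⁻¹ := by ring
  simp only [heatRHS]
  linarith

include hq hderiv hLY in
lemma monotoneOn_add_log (x : V) : MonotoneOn (fun s => u s x + n / 2 * log s) (Ioi 0) :=
  monotoneOn_of_hasDerivWithinAt_nonneg (convex_Ioi 0)
    (fun _ hs => (hasDerivAt_add_log hderiv hs x).continuousAt.continuousWithinAt)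
    (fun _ hs => (hasDerivAt_add_log hderiv (interior_subset hs) x).hasDerivWithinAt)
    (fun _ hs => (gGamma_nonneg hq _ x).trans (gGamma_le_heatRHS_add hLY (interior_subset hs) x))

variable (hqmin_pos : 0 < qmin) (hqmin : ∀ x y, 0 < q x y → qmin ≤ q x y)
include hq hderiv hLY hqmin_pos hqmin

theorem harnack_edge {a b : ℝ} (ha : 0 < a) (hab : a < b) {x y : V} (hxy : (graphOf q).Adj x y) :
    u a x - u b y ≤ n / 2 * (log b - log a) + 2 / (qmin * (b - a)) := by
  have hIcc : ∀ s ∈ Icc a b, s ∈ Ioi (0 : ℝ) := fun s hs => ha.trans_le hs.1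
  have ha' := hIcc a (left_mem_Icc.2 hab.le)
  have hb' := hIcc b (right_mem_Icc.2 hab.le)
  have hK : 0 ≤ 2 / (qmin * (b - a)) := by have := sub_pos.2 hab; positivity
  have hx : ∀ s ∈ Icc a b, u a x + n / 2 * log a ≤ u s x + n / 2 * log s := fun s hs =>
    monotoneOn_add_log hq hderiv hLY x ha' (hIcc s hs) hs.1
  have hy : ∀ s ∈ Icc a b, u s y + n / 2 * log s ≤ u b y + n / 2 * log b := fun s hs =>
    monotoneOn_add_log hq hderiv hLY y (hIcc s hs) hb' hs.2
  rcases hxy.2 with hxy | hyx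
  · obtain ⟨s, hs, hsq⟩ := exists_two_mul_le_sq_of_le_deriv hab hqmin_pos
      (fun s hs => hasDerivAt_add_log hderiv (hIcc s hs) x) (fun s _ => gGamma_nonneg hq _ x)
      (fun s hs => gGamma_le_heatRHS_add hLY (hIcc s hs) x)
    have hjump := abs_sub_le_of_two_mul_gGamma_le hq hqmin_pos hqmin hxy
      (by linarith [hx s hs]) hsq
    linarith [hy s hs, neg_abs_le (u s y - u s x)]
  · obtain ⟨s, hs, hsq⟩ := exists_two_mul_le_sq_of_le_deriv' hab hqmin_pos
      (fun s hs => hasDerivAt_add_log hderiv (hIcc s hs) y) (fun s _ => gGamma_nonneg hq _ y)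
      (fun s hs => gGamma_le_heatRHS_add hLY (hIcc s hs) y)
    have hjump := abs_sub_le_of_two_mul_gGamma_le hq hqmin_pos hqmin hyx
      (by linarith [hy s hs]) hsq
    linarith [hx s hs, le_abs_self (u s x - u s y)]

theorem harnack_walk {x y : V} (p : (graphOf q).Walk x y) {τ : ℝ} (hτ : 0 < τ) :
    ∀ T₁ T₂, 0 < T₁ → T₁ + p.length * τ ≤ T₂ →
      u T₁ x - u T₂ y ≤ n / 2 * (log T₂ - log T₁) + 2 * p.length / (qmin * τ) := by
  induction p with
  | @nil z =>
    intro T₁ T₂ hT₁ hT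
    simp only [Walk.length_nil, CharP.cast_eq_zero, zero_mul, add_zero, mul_zero, zero_div]
      at hT ⊢
    have hmono : u T₁ z + n / 2 * log T₁ ≤ u T₂ z + n / 2 * log T₂ :=
      monotoneOn_add_log hq hderiv hLY z hT₁ (hT₁.trans_le hT) hT
    linarith
  | cons hxy p ih =>
    intro T₁ T₂ hT₁ hT
    rw [Walk.length_cons, Nat.cast_succ] at hT
    have hedge := harnack_edge hq hderiv hLY hqmin_pos hqmin hT₁ (lt_add_of_pos_right T₁ hτ) hxy
    have hrest := ih (T₁ + τ) T₂ (by positivity) (by linarith)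
    rw [add_sub_cancel_left] at hedge
    have hsplit : 2 * ((p.length : ℝ) + 1) / (qmin * τ)
        = 2 / (qmin * τ) + 2 * p.length / (qmin * τ) := by ring
    simp only [Walk.length_cons]
    push_cast
    linarith

end Harnack

theorem harnack_CD_zero_n_general {V : Type*} [Fintype V] (q : V → V → ℝ)
    (hq : ∀ x y, 0 ≤ q x y) (qmin n : ℝ) (hn : 0 < n)
    (hqmin_pos : 0 < qmin) (hqmin : ∀ x y, 0 < q x y → qmin ≤ q x y)
    (hconn : (graphOf q).Connected)
    (hCD : ∀ f : V → ℝ, ∀ x, (1 / n) * (glap q f x) ^ 2 ≤ gGammaTwo q f x)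
    (u : ℝ → V → ℝ)
    (hu : ∀ t ∈ Set.Ici (0 : ℝ), ∀ x, HasDerivWithinAt (fun s => u s x)
      (glap q (u t) x + gGamma q (u t) x) (Set.Ici 0) t)
    (h0 : (⨆ x, gGamma q (u 0) x) ≤ qmin / 2) :
    ∀ x y : V, ∀ T₁ T₂ : ℝ, 0 < T₁ → T₁ < T₂ →
      u T₁ x - u T₂ y ≤ (n / 2) * Real.log (T₂ / T₁)
        + 2 * ((graphOf q).dist x y : ℝ) ^ 2 / (qmin * (T₂ - T₁)) := by
  have h0' : ∀ x, gGamma q (u 0) x ≤ qmin / 2 := fun x =>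
    (le_ciSup (Set.finite_range _).bddAbove x).trans h0
  have hderiv := fun t (ht : 0 < t) x => hasDerivAt_of_solution hu ht x
  have hLY := fun t (ht : 0 < t) x => neg_glap_le_of_solution hu hq hqmin_pos hqmin hCD h0' hn ht x
  intro x y T₁ T₂ hT₁ hT₁₂
  obtain ⟨p, hp⟩ := hconn.exists_walk_length_eq_dist x y
  rw [log_div (hT₁.trans hT₁₂).ne' hT₁.ne', ← hp]
  rcases Nat.eq_zero_or_pos p.length with hd | hd
  · simpa [hd] using harnack_walk hq hderiv hLY hqmin_pos hqmin p one_pos T₁ T₂ hT₁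
      (by simp only [hd, Nat.cast_zero, zero_mul, add_zero]; linarith)
  · have hd' : (0 : ℝ) < p.length := Nat.cast_pos.2 hd
    have hτ : 0 < (T₂ - T₁) / p.length := div_pos (sub_pos.2 hT₁₂) hd'
    convert harnack_walk hq hderiv hLY hqmin_pos hqmin p hτ T₁ T₂ hT₁
      (by rw [mul_div_cancel₀ _ hd'.ne']; linarith) using 2
    field_simp

/-- Parabolic Harnack inequality under CD(0,n) for the modified heat equation. -/
theorem harnack_CD_zero_n {V : Type*} [Fintype V] (q : V → V → ℝ)
    (hq : ∀ x y, 0 ≤ q x y) (hdiag : ∀ x, q x x = 0) (qmin n : ℝ) (hn : 0 < n)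
    (hqmin_pos : 0 < qmin) (hqmin : ∀ x y, 0 < q x y → qmin ≤ q x y)
    (hconn : (graphOf q).Connected)
    (hCD : ∀ f : V → ℝ, ∀ x, (1 / n) * (glap q f x) ^ 2 ≤ gGammaTwo q f x)
    (u : ℝ → V → ℝ)
    (hu : ∀ t ∈ Set.Ici (0 : ℝ), ∀ x, HasDerivWithinAt (fun s => u s x)
      (glap q (u t) x + gGamma q (u t) x) (Set.Ici 0) t)
    (h0 : (⨆ x, gGamma q (u 0) x) ≤ qmin / 2) :
    ∀ x y : V, ∀ T₁ T₂ : ℝ, 0 < T₁ → T₁ < T₂ →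
      u T₁ x - u T₂ y ≤ (n / 2) * Real.log (T₂ / T₁)
        + 2 * ((graphOf q).dist x y : ℝ) ^ 2 / (qmin * (T₂ - T₁)) :=
  harnack_CD_zero_n_general q hq qmin n hn hqmin_pos hqmin hconn hCD u hu h0
end

section
/- Let (V,q) be a finite reversible weighted graph (with reversible measure m) satisfying CD(0,∞), and let (u_t) solve ∂_t u_t = Δu_t + Γu_t with Γu_0 ≤ q_min/2. Then the ℓ¹-norm ‖e^{αu_t}‖₁ = Σ_x e^{αu_t(x)} m(x) is nonincreasing in t for α ≥ log 3 and nondecreasing in t for 0 < α ≤ 1. -/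
open Finset Real

open Filter Set
open scoped Topology

-- Lemma A: for t ≥ 0, 2(e^t - 1) ≤ t(1 + e^t)
lemma lemA {t : ℝ} (ht : 0 ≤ t) : 2 * (Real.exp t - 1) ≤ t * (1 + Real.exp t) := by
  have key : ∀ s : ℝ, 0 ≤ 1 + (s - 1) * Real.exp s := by
    intro s
    have h1 : 1 - s ≤ Real.exp (-s) := by
      have := Real.add_one_le_exp (-s); linarith
    have h2 : (1 - s) * Real.exp s ≤ Real.exp (-s) * Real.exp s :=
      mul_le_mul_of_nonneg_right h1 (Real.exp_pos s).le
    rw [← Real.exp_add, neg_add_cancel, Real.exp_zero] at h2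
    nlinarith
  set f : ℝ → ℝ := fun s => s * (1 + Real.exp s) - 2 * (Real.exp s - 1) with hf
  have hd : ∀ s : ℝ, HasDerivAt f (1 + (s - 1) * Real.exp s) s := by
    intro s
    have h1 : HasDerivAt (fun s : ℝ => s * (1 + Real.exp s))
        (1 * (1 + Real.exp s) + s * Real.exp s) s :=
      (hasDerivAt_id s).mul ((Real.hasDerivAt_exp s).const_add 1)
    have h2 : HasDerivAt (fun s : ℝ => 2 * (Real.exp s - 1)) (2 * Real.exp s) s :=
      ((Real.hasDerivAt_exp s).sub_const 1).const_mul 2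
    have := h1.sub h2
    exact this.congr_deriv (by ring)
  have hmono : MonotoneOn f (Set.Ici (0:ℝ)) := by
    apply monotoneOn_of_deriv_nonneg (convex_Ici 0)
    · exact (Continuous.continuousOn (by continuity))
    · intro s hs; exact (hd s).differentiableAt.differentiableWithinAt
    · intro s hs; rw [(hd s).deriv]; exact key s
  have h0 : f 0 = 0 := by simp [hf]
  have := hmono (Set.self_mem_Ici) (Set.mem_Ici.2 ht) ht
  rw [h0] at this
  simp only [hf] at this
  linarith

-- Lemma B: for d ∈ [0,1], 2 + d ≤ e^{d log 3} (2 - d)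
lemma lemB {d : ℝ} (h0 : 0 ≤ d) (h1 : d ≤ 1) :
    2 + d ≤ Real.exp (d * Real.log 3) * (2 - d) := by
  set x : ℝ := d / 2 with hx
  have hx0 : 0 ≤ x := by positivity
  have hx2 : x ≤ 1/2 := by rw [hx]; linarith
  have habs : |x| < 1 := by rw [abs_of_nonneg hx0]; linarith
  have hhalf : |(1:ℝ)/2| < 1 := by rw [abs_of_nonneg (by norm_num : (0:ℝ) ≤ 1/2)]; norm_num
  have hs1 := Real.hasSum_log_sub_log_of_abs_lt_one habs
  have hs2 := (Real.hasSum_log_sub_log_of_abs_lt_one hhalf).mul_left d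
  have hlog3 : Real.log (1 + 1/2) - Real.log (1 - 1/2) = Real.log 3 := by
    rw [← Real.log_div (by norm_num) (by norm_num)]
    norm_num
  rw [hlog3] at hs2
  have hle : Real.log (1 + x) - Real.log (1 - x) ≤ d * Real.log 3 := by
    refine hasSum_le ?_ hs1 hs2
    intro k
    have hd2x : d = 2 * x := by rw [hx]; ring
    rw [hd2x]
    have hxp : x ^ (2*k+1) ≤ 2 * x * (1/2)^(2*k+1) := by
      have : (1/2:ℝ)^(2*k+1) = (1/2) * (1/2)^(2*k) := by ring
      rw [this]
      have hxk : x ^ (2*k) ≤ (1/2)^(2*k) := pow_le_pow_left₀ hx0 hx2 _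
      calc x ^ (2*k+1) = x * x^(2*k) := by ring
        _ ≤ x * (1/2)^(2*k) := by
            exact mul_le_mul_of_nonneg_left hxk hx0
        _ = 2 * x * ((1/2) * (1/2)^(2*k)) := by ring
    have hc : (0:ℝ) ≤ 2 * (1 / (2*(k:ℝ)+1)) := by positivity
    calc (2:ℝ) * (1 / (2*(k:ℝ)+1)) * x ^ (2*k+1)
        ≤ 2 * (1 / (2*(k:ℝ)+1)) * (2 * x * (1/2)^(2*k+1)) := mul_le_mul_of_nonneg_left hxp hc
      _ = 2 * x * (2 * (1 / (2*(k:ℝ)+1)) * (1/2)^(2*k+1)) := by ring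
  -- exponentiate
  have h1x : (0:ℝ) < 1 - x := by linarith
  have h1xp : (0:ℝ) < 1 + x := by linarith
  have := Real.exp_le_exp.2 hle
  rw [Real.exp_sub, Real.exp_log h1xp, Real.exp_log h1x] at this
  have h2 : 1 + x ≤ Real.exp (d * Real.log 3) * (1 - x) := by
    rw [div_le_iff₀ h1x] at this; linarith
  have : 2 * (1 + x) ≤ 2 * (Real.exp (d * Real.log 3) * (1 - x)) := by linarith
  calc 2 + d = 2 * (1 + x) := by rw [hx]; ring
    _ ≤ 2 * (Real.exp (d * Real.log 3) * (1 - x)) := this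
    _ = Real.exp (d * Real.log 3) * (2 - d) := by rw [hx]; ring

lemma lem1' {α s : ℝ} (hα0 : 0 < α) (hα1 : α ≤ 1) (hs : 0 ≤ s) :
    α * s * (Real.exp (α * s) - 1) ≤ α / 2 * s ^ 2 * (1 + Real.exp (α * s)) := by
  have ht0 : 0 ≤ α * s := by positivity
  have hts : α * s ≤ s := by nlinarith
  have hA := lemA ht0
  have hpos : (0:ℝ) < 1 + Real.exp (α * s) := by positivity
  have h2 : 2 * (Real.exp (α*s) - 1) ≤ s * (1 + Real.exp (α*s)) := by
    calc 2 * (Real.exp (α*s) - 1) ≤ (α*s) * (1 + Real.exp (α*s)) := hA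
      _ ≤ s * (1 + Real.exp (α*s)) := mul_le_mul_of_nonneg_right hts hpos.le
  nlinarith [mul_le_mul_of_nonneg_left h2 (by positivity : (0:ℝ) ≤ α * s / 2)]

lemma flip_identity (α s A B : ℝ) (hAB : A * B = 1) :
    A * (α * (-s) * (1 - B) + α / 2 * (-s) ^ 2 * (1 + B))
      = α / 2 * s ^ 2 * (1 + A) - α * s * (A - 1) := by
  linear_combination (α * s + α / 2 * s ^ 2) * hAB

lemma lem1 {α d : ℝ} (hα0 : 0 < α) (hα1 : α ≤ 1) :
    0 ≤ α * d * (1 - Real.exp (α * d)) + α / 2 * d ^ 2 * (1 + Real.exp (α * d)) := by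
  rcases le_or_gt 0 d with hd | hd
  · have := lem1' hα0 hα1 hd; nlinarith
  · set s : ℝ := -d with hsdef
    have hs : 0 ≤ s := by simp only [hsdef]; linarith
    have h := lem1' hα0 hα1 hs
    have hds : d = -s := by rw [hsdef]; ring
    have hexp : Real.exp (α * s) * Real.exp (α * -s) = 1 := by
      rw [← Real.exp_add]; simp
    have expand := flip_identity α s (Real.exp (α * s)) (Real.exp (α * -s)) hexp
    have hkey : 0 ≤ Real.exp (α * s) *
        (α * d * (1 - Real.exp (α * d)) + α / 2 * d ^ 2 * (1 + Real.exp (α * d))) := by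
      rw [hds, expand]; linarith
    nlinarith [hkey, Real.exp_pos (α * s), Real.exp_pos (α * d)]

lemma lem2' {α s : ℝ} (hα : Real.log 3 ≤ α) (hs0 : 0 ≤ s) (hs1 : s ≤ 1) :
    α / 2 * s ^ 2 * (1 + Real.exp (α * s)) ≤ α * s * (Real.exp (α * s) - 1) := by
  have hlog3 : (0:ℝ) < Real.log 3 := Real.log_pos (by norm_num)
  have hα0 : 0 < α := lt_of_lt_of_le hlog3 hα
  have hts : s * Real.log 3 ≤ α * s := by nlinarith
  have hB := lemB hs0 hs1
  have hmon : Real.exp (s * Real.log 3) ≤ Real.exp (α * s) := Real.exp_le_exp.2 hts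
  have h2 : 2 + s ≤ Real.exp (α * s) * (2 - s) := by
    calc 2 + s ≤ Real.exp (s * Real.log 3) * (2 - s) := hB
      _ ≤ Real.exp (α * s) * (2 - s) := mul_le_mul_of_nonneg_right hmon (by linarith)
  nlinarith [mul_le_mul_of_nonneg_left h2 (by positivity : (0:ℝ) ≤ α * s / 2)]

lemma lem2 {α d : ℝ} (hα : Real.log 3 ≤ α) (hd : |d| ≤ 1) :
    α * d * (1 - Real.exp (α * d)) + α / 2 * d ^ 2 * (1 + Real.exp (α * d)) ≤ 0 := by
  rcases le_or_gt 0 d with h | h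
  · have hd1 : d ≤ 1 := le_trans (le_abs_self d) hd
    have := lem2' hα h hd1; nlinarith
  · set s : ℝ := -d with hsdef
    have hs0 : 0 ≤ s := by simp only [hsdef]; linarith
    have hs1 : s ≤ 1 := by
      have := neg_le_of_abs_le hd; simp only [hsdef]; linarith
    have h2 := lem2' hα hs0 hs1
    have hds : d = -s := by rw [hsdef]; ring
    have hexp : Real.exp (α * s) * Real.exp (α * -s) = 1 := by
      rw [← Real.exp_add]; simp
    have expand := flip_identity α s (Real.exp (α * s)) (Real.exp (α * -s)) hexp
    have hkey : Real.exp (α * s) *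
        (α * d * (1 - Real.exp (α * d)) + α / 2 * d ^ 2 * (1 + Real.exp (α * d))) ≤ 0 := by
      rw [hds, expand]; linarith
    nlinarith [hkey, Real.exp_pos (α * s), Real.exp_pos (α * d)]

lemma continuousOn_finset_sup' {ι : Type*} (s : Finset ι) (hne : s.Nonempty)
    (f : ι → ℝ → ℝ) (S : Set ℝ) (h : ∀ i ∈ s, ContinuousOn (f i) S) :
    ContinuousOn (fun t => s.sup' hne (f · t)) S := by
  induction hne using Finset.Nonempty.cons_induction with
  | singleton i => simpa using h i (by simp)
  | cons i s hi hs ih =>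
      have h1 : ContinuousOn (f i) S := h i (by simp)
      have h2 : ContinuousOn (fun t => s.sup' hs (f · t)) S :=
        ih (fun j hj => h j (Finset.mem_cons_of_mem hj))
      refine (h1.sup' h2).congr (fun t ht => ?_)
      rw [Finset.sup'_cons]
      rfl

lemma hasDeriv_gGamma {V : Type*} [Fintype V] (q : V → V → ℝ) (u : ℝ → V → ℝ)
    {t : ℝ} (w : V → ℝ)
    (hu : ∀ x, HasDerivWithinAt (fun s => u s x) (w x) (Set.Ici 0) t) (x : V) :
    HasDerivWithinAt (fun s => gGamma q (u s) x)
      (∑ y, q x y * (u t y - u t x) * (w y - w x)) (Set.Ici 0) t := by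
  have H : HasDerivWithinAt
      (fun s => (1/2 : ℝ) * ∑ y, q x y * ((u s y - u s x) * (u s y - u s x)))
      ((1/2 : ℝ) * ∑ y, q x y * ((w y - w x) * (u t y - u t x)
          + (u t y - u t x) * (w y - w x))) (Set.Ici 0) t := by
    refine HasDerivWithinAt.const_mul _ ?_
    refine HasDerivWithinAt.fun_sum (fun y _ => ?_)
    exact (((hu y).sub (hu x)).mul ((hu y).sub (hu x))).const_mul (q x y)
  have heq : ∀ s, gGamma q (u s) x
      = (1/2 : ℝ) * ∑ y, q x y * ((u s y - u s x) * (u s y - u s x)) := by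
    intro s
    simp only [gGamma, gGammaBil, mul_assoc]
  have H2 := H.congr (fun s _ => heq s) (heq t)
  refine H2.congr_deriv ?_
  rw [Finset.mul_sum]
  exact Finset.sum_congr rfl (fun y _ => by ring)

lemma hasDeriv_ell1 {V : Type*} [Fintype V] (q : V → V → ℝ) (u : ℝ → V → ℝ)
    (m : V → ℝ) (α : ℝ) {t : ℝ} (w : V → ℝ)
    (hu : ∀ x, HasDerivWithinAt (fun s => u s x) (w x) (Set.Ici 0) t) :
    HasDerivWithinAt (fun s => ∑ x, Real.exp (α * u s x) * m x)
      (∑ x, α * w x * Real.exp (α * u t x) * m x) (Set.Ici 0) t := by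
  refine HasDerivWithinAt.fun_sum (fun x _ => ?_)
  have h1 : HasDerivWithinAt (fun s => α * u s x) (α * w x) (Set.Ici 0) t :=
    (hu x).const_mul α
  have h2 := h1.exp
  have h3 := h2.mul_const (m x)
  refine h3.congr_deriv ?_
  ring

lemma gGamma_nonneg_s14 {V : Type*} [Fintype V] {q : V → V → ℝ} (hq : ∀ x y, 0 ≤ q x y)
    (v : V → ℝ) (x : V) : 0 ≤ gGamma q v x := by
  unfold gGamma gGammaBil
  have : ∀ y ∈ (univ : Finset V), 0 ≤ q x y * (v y - v x) * (v y - v x) :=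
    fun y _ => by nlinarith [hq x y, sq_nonneg (v y - v x)]
  have := Finset.sum_nonneg this
  linarith

lemma gGamma_term_le {V : Type*} [Fintype V] {q : V → V → ℝ} (hq : ∀ x y, 0 ≤ q x y)
    (v : V → ℝ) (x y : V) : q x y * (v y - v x) ^ 2 ≤ 2 * gGamma q v x := by
  unfold gGamma gGammaBil
  have h1 : q x y * (v y - v x) * (v y - v x) ≤ ∑ z, q x z * (v z - v x) * (v z - v x) :=
    Finset.single_le_sum (f := fun z => q x z * (v z - v x) * (v z - v x))
      (fun z _ => by beta_reduce; nlinarith [hq x z, sq_nonneg (v z - v x)]) (mem_univ y)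
  nlinarith [h1]

/-- termwise inequality at a maximum point -/
lemma term_ineq {a d g : ℝ} (ha : 1 ≤ a) (hd : d ^ 2 ≤ a) (hg : 0 ≤ g) :
    (1 + d) * (-g) ≤ (a - 1) * g := by
  have had : 0 ≤ a + d := by nlinarith
  nlinarith [mul_nonneg had hg]

/-- Estimate for the time-derivative of Γu at a maximum point. -/
lemma max_point_est {V : Type*} [Fintype V] (q : V → V → ℝ)
    (hq : ∀ x y, 0 ≤ q x y) {qmin : ℝ}
    (hqmin_pos : 0 < qmin) (hqmin : ∀ x y, 0 < q x y → qmin ≤ q x y)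
    (hCD : ∀ f : V → ℝ, ∀ x, 0 ≤ gGammaTwo q f x)
    (v : V → ℝ) (x : V) (Q : ℝ) (hQ : ∑ y, q x y ≤ Q)
    (hmax : ∀ y, gGamma q v y ≤ gGamma q v x)
    (hlo : qmin / 2 ≤ gGamma q v x) (hhi : gGamma q v x ≤ qmin) :
    ∑ y, q x y * (v y - v x) * ((glap q v y + gGamma q v y) - (glap q v x + gGamma q v x))
      ≤ 2 * Q * (gGamma q v x - qmin / 2) := by
  set Γ : V → ℝ := gGamma q v with hΓ
  set L : V → ℝ := glap q v with hL
  set M : ℝ := Γ x with hM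
  have hM0 : 0 < M := lt_of_lt_of_le (by linarith) hlo
  have hQ0 : 0 ≤ Q := le_trans (Finset.sum_nonneg (fun y _ => hq x y)) hQ
  set a : ℝ := 2 * M / qmin with haa
  have ha1 : 1 ≤ a := by rw [haa]; rw [le_div_iff₀ hqmin_pos]; linarith
  -- split the sum
  have hsplit : ∑ y, q x y * (v y - v x) * ((L y + Γ y) - (L x + Γ x))
      = (∑ y, q x y * (v y - v x) * (L y - L x))
        + ∑ y, q x y * (v y - v x) * (Γ y - Γ x) := by
    rw [← Finset.sum_add_distrib]
    exact Finset.sum_congr rfl (fun y _ => by ring)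
  -- CD condition controls the first sum
  have hCDx := hCD v x
  rw [gGammaTwo] at hCDx
  have hfirst : ∑ y, q x y * (v y - v x) * (L y - L x) ≤ glap q Γ x := by
    have : 2 * gGammaBil q v (glap q v) x = ∑ y, q x y * (v y - v x) * (L y - L x) := by
      rw [gGammaBil, hL]; ring
    linarith [hCDx]
  -- combine glap and second sum
  have hcomb : glap q Γ x + ∑ y, q x y * (v y - v x) * (Γ y - Γ x)
      = ∑ y, q x y * ((1 + (v y - v x)) * (Γ y - Γ x)) := by
    rw [glap, ← Finset.sum_add_distrib]
    exact Finset.sum_congr rfl (fun y _ => by ring)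
  -- termwise bound
  have hterm : ∀ y ∈ (univ : Finset V),
      q x y * ((1 + (v y - v x)) * (Γ y - Γ x)) ≤ q x y * ((a - 1) * M) := by
    intro y _
    rcases eq_or_lt_of_le (hq x y) with h0 | hpos
    · rw [← h0]; simp
    · have hqy : qmin ≤ q x y := hqmin x y hpos
      have hd2 : (v y - v x) ^ 2 ≤ a := by
        have h1 := gGamma_term_le hq v x y
        rw [haa]
        rw [le_div_iff₀ hqmin_pos]
        have : qmin * (v y - v x)^2 ≤ q x y * (v y - v x)^2 :=
          mul_le_mul_of_nonneg_right hqy (sq_nonneg _)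
        calc (v y - v x)^2 * qmin = qmin * (v y - v x)^2 := by ring
          _ ≤ q x y * (v y - v x)^2 := this
          _ ≤ 2 * M := by rw [hM, hΓ]; exact h1
      have hg : 0 ≤ M - Γ y := by linarith [hmax y]
      have := term_ineq ha1 hd2 hg
      have h2 : (1 + (v y - v x)) * (Γ y - Γ x) ≤ (a - 1) * (M - Γ y) := by
        have : (1 + (v y - v x)) * (-(M - Γ y)) ≤ (a - 1) * (M - Γ y) := term_ineq ha1 hd2 hg
        calc (1 + (v y - v x)) * (Γ y - Γ x) = (1 + (v y - v x)) * (-(M - Γ y)) := by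
              rw [hM]; ring
          _ ≤ (a - 1) * (M - Γ y) := this
      have h3 : (a - 1) * (M - Γ y) ≤ (a - 1) * M := by
        have hΓy : 0 ≤ Γ y := gGamma_nonneg_s14 hq v y
        nlinarith
      have := le_trans h2 h3
      exact mul_le_mul_of_nonneg_left this (hq x y)
  have hsum : ∑ y, q x y * ((1 + (v y - v x)) * (Γ y - Γ x))
      ≤ (∑ y, q x y) * ((a - 1) * M) := by
    rw [Finset.sum_mul]
    exact Finset.sum_le_sum hterm
  have hfin : (∑ y, q x y) * ((a - 1) * M) ≤ 2 * Q * (M - qmin / 2) := by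
    have haM : (a - 1) * M ≤ 2 * (M - qmin/2) := by
      rw [haa]
      rw [div_sub' (ne_of_gt hqmin_pos)]
      rw [div_mul_eq_mul_div, div_le_iff₀ hqmin_pos]
      nlinarith
    have h1 : (∑ y, q x y) * ((a - 1) * M) ≤ Q * ((a - 1) * M) := by
      apply mul_le_mul_of_nonneg_right hQ
      nlinarith
    calc (∑ y, q x y) * ((a - 1) * M) ≤ Q * ((a - 1) * M) := h1
      _ ≤ Q * (2 * (M - qmin/2)) := mul_le_mul_of_nonneg_left haM hQ0
      _ = 2 * Q * (M - qmin/2) := by ring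
  calc ∑ y, q x y * (v y - v x) * ((L y + Γ y) - (L x + Γ x))
      = (∑ y, q x y * (v y - v x) * (L y - L x)) + ∑ y, q x y * (v y - v x) * (Γ y - Γ x) :=
        hsplit
    _ ≤ glap q Γ x + ∑ y, q x y * (v y - v x) * (Γ y - Γ x) := by linarith [hfirst]
    _ = ∑ y, q x y * ((1 + (v y - v x)) * (Γ y - Γ x)) := hcomb
    _ ≤ (∑ y, q x y) * ((a - 1) * M) := hsum
    _ ≤ 2 * Q * (M - qmin / 2) := hfin

/-- maximum principle: the gradient bound propagates. -/
lemma gamma_le {V : Type*} [Fintype V] (q : V → V → ℝ)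
    (hq : ∀ x y, 0 ≤ q x y) {qmin : ℝ}
    (hqmin_pos : 0 < qmin) (hqmin : ∀ x y, 0 < q x y → qmin ≤ q x y)
    (hCD : ∀ f : V → ℝ, ∀ x, 0 ≤ gGammaTwo q f x)
    (u : ℝ → V → ℝ)
    (hu : ∀ t ∈ Set.Ici (0 : ℝ), ∀ x, HasDerivWithinAt (fun s => u s x)
      (glap q (u t) x + gGamma q (u t) x) (Set.Ici 0) t)
    (h0 : ∀ x, gGamma q (u 0) x ≤ qmin / 2) :
    ∀ t ∈ Set.Ici (0 : ℝ), ∀ x, gGamma q (u t) x ≤ qmin / 2 := by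
  by_contra hcon
  push_neg at hcon
  obtain ⟨t₁, ht₁, x₁, hx₁⟩ := hcon
  haveI : Nonempty V := ⟨x₁⟩
  have hne : (Finset.univ : Finset V).Nonempty := Finset.univ_nonempty
  set c : ℝ := qmin / 2 with hc
  have hc0 : 0 < c := by rw [hc]; linarith
  set G : V → ℝ → ℝ := fun x t => gGamma q (u t) x with hG
  set F : ℝ → ℝ := fun t => univ.sup' hne (fun x => G x t) with hF
  set D : V → ℝ → ℝ := fun x t => ∑ y, q x y * (u t y - u t x) *
      ((glap q (u t) y + gGamma q (u t) y) - (glap q (u t) x + gGamma q (u t) x)) with hD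
  have hGD : ∀ (x : V), ∀ t ∈ Set.Ici (0:ℝ),
      HasDerivWithinAt (G x) (D x t) (Set.Ici 0) t :=
    fun x t ht => hasDeriv_gGamma q u _ (hu t ht) x
  have hGc : ∀ x : V, ContinuousOn (G x) (Set.Ici 0) :=
    fun x t ht => (hGD x t ht).continuousWithinAt
  have hFc : ContinuousOn F (Set.Ici 0) :=
    continuousOn_finset_sup' _ hne _ _ (fun x _ => hGc x)
  have hGleF : ∀ (x : V) (t : ℝ), G x t ≤ F t := by
    intro x t
    simp only [hF]
    exact Finset.le_sup' (fun x => G x t) (mem_univ x)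
  have hFle : ∀ (t : ℝ) (b : ℝ), (∀ x, G x t ≤ b) → F t ≤ b := by
    intro t b hb
    simp only [hF]
    exact Finset.sup'_le _ _ (fun x _ => hb x)
  have hF0 : F 0 ≤ c := hFle 0 c h0
  have hFt₁ : c < F t₁ := lt_of_lt_of_le hx₁ (hGleF x₁ t₁)
  -- degree bound
  set Q : ℝ := univ.sup' hne (fun x => ∑ y, q x y) with hQdef
  have hQ : ∀ x : V, ∑ y, q x y ≤ Q := by
    intro x
    simp only [hQdef]
    exact Finset.le_sup' (fun x => ∑ y, q x y) (mem_univ x)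
  -- first crossing time
  set S : Set ℝ := Set.Icc 0 t₁ ∩ F ⁻¹' (Set.Iic c) with hS
  have hIccIci : Set.Icc (0:ℝ) t₁ ⊆ Set.Ici 0 := fun s hs => hs.1
  have hSclosed : IsClosed S :=
    ContinuousOn.preimage_isClosed_of_isClosed (hFc.mono hIccIci) isClosed_Icc isClosed_Iic
  have h0S : (0:ℝ) ∈ S := ⟨⟨le_refl 0, ht₁⟩, hF0⟩
  have hSne : S.Nonempty := ⟨0, h0S⟩
  have hSbdd : BddAbove S := BddAbove.mono (fun s hs => hs.1) (bddAbove_Icc)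
  set T : ℝ := sSup S with hT
  have hTS : T ∈ S := hSclosed.csSup_mem hSne hSbdd
  obtain ⟨⟨hT0, hTt₁⟩, hFT⟩ := hTS
  have hFT' : F T ≤ c := hFT
  have hTlt : T < t₁ := lt_of_le_of_ne hTt₁ (fun h => by rw [h] at hFT'; exact absurd hFt₁ (not_lt.2 hFT'))
  have hgt : ∀ s, T < s → s ≤ t₁ → c < F s := by
    intro s hs hs'
    by_contra hle
    push_neg at hle
    have : s ∈ S := ⟨⟨le_trans hT0 hs.le, hs'⟩, hle⟩
    exact absurd (le_csSup hSbdd this) (not_le.2 hs)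
  -- F T = c
  have hFTc : F T = c := by
    refine le_antisymm hFT' ?_
    have hmem : Set.Ioc T t₁ ∈ 𝓝[>] T := Ioc_mem_nhdsGT_of_mem ⟨le_refl T, hTlt⟩
    have htend : Tendsto F (𝓝[>] T) (𝓝 (F T)) := by
      have h1 : ContinuousWithinAt F (Set.Ici 0) T := hFc T hT0
      exact h1.tendsto.mono_left (nhdsWithin_mono T (fun z hz => le_trans hT0 (le_of_lt hz)))
    refine ge_of_tendsto htend ?_
    filter_upwards [hmem] with z hz
    exact (hgt z hz.1 hz.2).le
  -- MAIN Gronwall step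
  have main : ∀ b, T < b → b ≤ t₁ → (∀ s ∈ Set.Ico T b, F s < qmin) → F b ≤ c := by
    intro b hTb hbt₁ hFlt
    -- maximizer sets
    have hAne : ∀ s : ℝ, (univ.filter (fun y => F s ≤ G y s)).Nonempty := by
      intro s
      obtain ⟨y, hy, hysup⟩ := Finset.exists_mem_eq_sup' hne (fun x => G x s)
      exact ⟨y, Finset.mem_filter.2 ⟨hy, le_of_eq hysup⟩⟩
    set f' : ℝ → ℝ := fun s => (univ.filter (fun y => F s ≤ G y s)).sup' (hAne s)
      (fun y => D y s) with hf'def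
    have hIcobIci : ∀ s ∈ Set.Ico T b, s ∈ Set.Ici (0:ℝ) := fun s hs => le_trans hT0 hs.1
    have key := le_gronwallBound_of_liminf_deriv_right_le
      (f := fun s => F s - c) (f' := f') (δ := 0) (K := 2 * Q) (ε := 0) (a := T) (b := b)
      ?_ ?_ ?_ ?_
    · have := key b ⟨hTb.le, le_refl b⟩
      rw [gronwallBound_ε0, zero_mul] at this
      linarith
    · -- continuity
      have : Set.Icc T b ⊆ Set.Ici 0 := fun s hs => le_trans hT0 hs.1
      exact ((hFc.mono this).sub continuousOn_const)
    · -- slope condition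
      intro s hs r hr
      have hs0 : (0:ℝ) ≤ s := hIcobIci s hs
      -- each maximizer has small slope eventually
      have hsub : Set.Ioi s ⊆ Set.Ici 0 \ {s} :=
        fun z hz => ⟨le_trans hs0 (le_of_lt hz), ne_of_gt hz⟩
      have hmono : 𝓝[>] s ≤ 𝓝[Set.Ici 0 \ {s}] s := nhdsWithin_mono s hsub
      have hev1 : ∀ᶠ z in 𝓝[>] s, ∀ y : V, F s ≤ G y s → slope (G y) s z < r := by
        refine eventually_all.2 (fun y => ?_)
        by_cases hy : F s ≤ G y s
        · have hyfilt : y ∈ univ.filter (fun y => F s ≤ G y s) :=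
            Finset.mem_filter.2 ⟨mem_univ y, hy⟩
          have hDr : D y s < r := by
            refine lt_of_le_of_lt ?_ hr
            have := Finset.le_sup' (fun y => D y s) hyfilt
            exact this
          have hslope : Tendsto (slope (G y) s) (𝓝[Set.Ici 0 \ {s}] s) (𝓝 (D y s)) :=
            (hasDerivWithinAt_iff_tendsto_slope).1 (hGD y s hs0)
          have hev := (hslope.mono_left hmono).eventually (eventually_lt_nhds hDr)
          filter_upwards [hev] with z hz
          exact fun _ => hz
        · filter_upwards with z hz; exact absurd hz hy
      -- non-maximizers eventually below a maximizer
      obtain ⟨y₀, hy₀filt⟩ := hAne s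
      obtain ⟨-, hy₀F⟩ := Finset.mem_filter.1 hy₀filt
      have hGy₀ : G y₀ s = F s := le_antisymm (hGleF y₀ s) hy₀F
      have htendy : ∀ y : V, Tendsto (G y) (𝓝[>] s) (𝓝 (G y s)) := by
        intro y
        have h1 : ContinuousWithinAt (G y) (Set.Ici 0) s := hGc y s hs0
        exact h1.tendsto.mono_left (nhdsWithin_mono s (fun z hz => le_trans hs0 (le_of_lt hz)))
      have hev2 : ∀ᶠ z in 𝓝[>] s, ∀ y : V, ¬ (F s ≤ G y s) → G y z < G y₀ z := by
        refine eventually_all.2 (fun y => ?_)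
        by_cases hy : F s ≤ G y s
        · filter_upwards with z hz; exact absurd hy hz
        · push_neg at hy
          have hpos : 0 < G y₀ s - G y s := by rw [hGy₀]; linarith
          have htd : Tendsto (fun z => G y₀ z - G y z) (𝓝[>] s) (𝓝 (G y₀ s - G y s)) :=
            (htendy y₀).sub (htendy y)
          have := htd.eventually (eventually_gt_nhds hpos)
          filter_upwards [this] with z hz
          intro _
          linarith
      -- combine
      refine Filter.Eventually.frequently ?_
      filter_upwards [hev1, hev2, self_mem_nhdsWithin] with z hz1 hz2 hz3
      obtain ⟨yz, -, hyz⟩ := Finset.exists_mem_eq_sup' hne (fun x => G x z)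
      have hFzG : F z = G yz z := by simp only [hF]; exact hyz
      have hyzmax : F s ≤ G yz s := by
        by_contra hno
        have h1 : G yz z < G y₀ z := hz2 yz hno
        have h2 : G y₀ z ≤ F z := hGleF y₀ z
        rw [hFzG] at h2
        linarith
      have hzs : s < z := hz3
      have hslopelt : slope (G yz) s z < r := hz1 yz hyzmax
      rw [slope_def_field] at hslopelt
      have hGyzs : G yz s = F s := le_antisymm (hGleF yz s) hyzmax
      have : (z - s)⁻¹ * (F z - F s) < r := by
        rw [hFzG, ← hGyzs]
        have hne0 : z - s > 0 := by linarith
        calc (z - s)⁻¹ * (G yz z - G yz s) = (G yz z - G yz s) / (z - s) := by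
              rw [div_eq_inv_mul]
          _ < r := hslopelt
      calc (z - s)⁻¹ * (F z - c - (F s - c)) = (z - s)⁻¹ * (F z - F s) := by ring_nf
        _ < r := this
    · -- initial value
      show F T - c ≤ 0
      rw [hFTc]; simp
    · -- bound
      intro s hs
      have hs0 : (0:ℝ) ≤ s := hIcobIci s hs
      rw [hf'def]
      refine Finset.sup'_le _ _ ?_
      intro y hy
      obtain ⟨-, hyF⟩ := Finset.mem_filter.1 hy
      have hGyF : G y s = F s := le_antisymm (hGleF y s) hyF
      have hcF : c ≤ F s := by
        rcases eq_or_lt_of_le hs.1 with h | h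
        · rw [← h, hFTc]
        · exact (hgt s h (le_trans hs.2.le hbt₁)).le
      have hest := max_point_est q hq hqmin_pos hqmin hCD (u s) y Q (hQ y)
        (fun z => show G z s ≤ G y s from le_of_le_of_eq (hGleF z s) hGyF.symm)
        (show qmin / 2 ≤ G y s by rw [hGyF, ← hc]; exact hcF)
        (show G y s ≤ qmin by rw [hGyF]; exact (hFlt s hs).le)
      show D y s ≤ 2 * Q * (F s - c) + 0
      calc D y s ≤ 2 * Q * (G y s - qmin / 2) := hest
        _ = 2 * Q * (F s - c) + 0 := by rw [hGyF, hc]; ring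
  -- second crossing / conclusion
  set A2 : Set ℝ := Set.Icc T t₁ ∩ F ⁻¹' Set.Ici qmin with hA2
  rcases Set.eq_empty_or_nonempty A2 with hA2e | hA2ne
  · -- no second crossing: apply main on [T, t₁]
    have hlt : ∀ s ∈ Set.Ico T t₁, F s < qmin := by
      intro s hsmem
      by_contra hge
      push_neg at hge
      have hsA2 : s ∈ A2 := ⟨⟨hsmem.1, hsmem.2.le⟩, hge⟩
      rw [hA2e] at hsA2
      exact Set.notMem_empty s hsA2
    have := main t₁ hTlt (le_refl t₁) hlt
    linarith
  · have hIccTIci : Set.Icc T t₁ ⊆ Set.Ici 0 := fun s hsm => le_trans hT0 hsm.1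
    have hA2closed : IsClosed A2 :=
      ContinuousOn.preimage_isClosed_of_isClosed (hFc.mono hIccTIci) isClosed_Icc isClosed_Ici
    have hA2bdd : BddBelow A2 := BddBelow.mono (fun s hsm => hsm.1) bddBelow_Icc
    set t₂ : ℝ := sInf A2 with ht₂
    have ht₂A2 : t₂ ∈ A2 := hA2closed.csInf_mem hA2ne hA2bdd
    obtain ⟨⟨hTt₂, ht₂t₁⟩, hFt₂⟩ := ht₂A2
    have hFt₂' : qmin ≤ F t₂ := hFt₂
    have hTltt₂ : T < t₂ := by
      rcases eq_or_lt_of_le hTt₂ with h | h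
      · exfalso; rw [← h] at hFt₂'; rw [hFTc] at hFt₂'; linarith
      · exact h
    have hlt : ∀ s ∈ Set.Ico T t₂, F s < qmin := by
      intro s hsmem
      by_contra hge
      push_neg at hge
      have : s ∈ A2 := ⟨⟨hsmem.1, le_trans hsmem.2.le ht₂t₁⟩, hge⟩
      exact absurd (csInf_le hA2bdd this) (not_le.2 hsmem.2)
    have := main t₂ hTltt₂ ht₂t₁ hlt
    linarith

lemma deriv_identity {V : Type*} [Fintype V] (q : V → V → ℝ) (m : V → ℝ)
    (hrev : ∀ x y, q x y * m x = q y x * m y) (α : ℝ) (v : V → ℝ) :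
    ∑ x, α * (glap q v x + gGamma q v x) * Real.exp (α * v x) * m x
    = (1/2) * ∑ x, ∑ y, m x * q x y * (Real.exp (α * v x) *
        (α * (v y - v x) * (1 - Real.exp (α * (v y - v x)))
          + α / 2 * (v y - v x) ^ 2 * (1 + Real.exp (α * (v y - v x))))) := by
  set B : V → V → ℝ := fun x y => m x * q x y *
      (α * (v y - v x) * (Real.exp (α * v x) + Real.exp (α * v y)) / 2
        + α / 4 * (v y - v x) ^ 2 * (Real.exp (α * v x) - Real.exp (α * v y))) with hB
  have hexp : ∀ x y : V, Real.exp (α * v x) * Real.exp (α * (v y - v x)) = Real.exp (α * v y) := by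
    intro x y
    rw [← Real.exp_add]
    congr 1
    ring
  -- expand LHS into double sum
  have hx : ∀ x : V, α * (glap q v x + gGamma q v x) * Real.exp (α * v x) * m x
      = ∑ y, m x * q x y * Real.exp (α * v x)
          * (α * (v y - v x) + α / 2 * (v y - v x) ^ 2) := by
    intro x
    rw [glap, gGamma, gGammaBil]
    set e := Real.exp (α * v x)
    calc α * ((∑ y, q x y * (v y - v x)) + (1/2) * ∑ y, q x y * (v y - v x) * (v y - v x))
          * e * m x
        = (α * e * m x) * (∑ y, q x y * (v y - v x))
          + (α / 2 * e * m x) * (∑ y, q x y * (v y - v x) * (v y - v x)) := by ring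
      _ = (∑ y, (α * e * m x) * (q x y * (v y - v x)))
          + ∑ y, (α / 2 * e * m x) * (q x y * (v y - v x) * (v y - v x)) := by
            rw [Finset.mul_sum, Finset.mul_sum]
      _ = ∑ y, m x * q x y * e * (α * (v y - v x) + α / 2 * (v y - v x) ^ 2) := by
            rw [← Finset.sum_add_distrib]
            exact Finset.sum_congr rfl (fun y _ => by ring)
  -- per-pair decomposition
  have hpair : ∀ x y : V, m x * q x y * Real.exp (α * v x)
        * (α * (v y - v x) + α / 2 * (v y - v x) ^ 2)
      = (1/2) * (m x * q x y * (Real.exp (α * v x) *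
          (α * (v y - v x) * (1 - Real.exp (α * (v y - v x)))
            + α / 2 * (v y - v x) ^ 2 * (1 + Real.exp (α * (v y - v x)))))) + B x y := by
    intro x y
    simp only [hB]
    linear_combination (m x * q x y * (α * (v y - v x) / 2 - α / 4 * (v y - v x)^2)) * hexp x y
  -- antisymmetry of B
  have hanti : ∀ x y : V, B y x = - B x y := by
    intro x y
    simp only [hB]
    linear_combination (α * (v y - v x) * (Real.exp (α * v x) + Real.exp (α * v y)) / 2
      + α / 4 * (v y - v x) ^ 2 * (Real.exp (α * v x) - Real.exp (α * v y))) * hrev x y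
  have hBzero : ∑ x, ∑ y, B x y = 0 := by
    have h1 : ∑ x, ∑ y, B x y = ∑ y, ∑ x, B x y := Finset.sum_comm
    have h2 : ∑ y, ∑ x, B x y = ∑ x, ∑ y, B y x := rfl
    have h3 : ∑ x : V, ∑ y, B y x = ∑ x : V, ∑ y, - B x y := by
      exact Finset.sum_congr rfl (fun x _ => Finset.sum_congr rfl (fun y _ => hanti x y))
    have h4 : ∑ x : V, ∑ y, - B x y = - ∑ x : V, ∑ y, B x y := by
      rw [← Finset.sum_neg_distrib]
      exact Finset.sum_congr rfl (fun x _ => by rw [Finset.sum_neg_distrib])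
    have : ∑ x, ∑ y, B x y = - ∑ x, ∑ y, B x y := h1.trans (h2.trans (h3.trans h4))
    linarith
  calc ∑ x, α * (glap q v x + gGamma q v x) * Real.exp (α * v x) * m x
      = ∑ x, ∑ y, m x * q x y * Real.exp (α * v x)
          * (α * (v y - v x) + α / 2 * (v y - v x) ^ 2) :=
        Finset.sum_congr rfl (fun x _ => hx x)
    _ = ∑ x, ∑ y, ((1/2) * (m x * q x y * (Real.exp (α * v x) *
          (α * (v y - v x) * (1 - Real.exp (α * (v y - v x)))
            + α / 2 * (v y - v x) ^ 2 * (1 + Real.exp (α * (v y - v x)))))) + B x y) := by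
        exact Finset.sum_congr rfl (fun x _ => Finset.sum_congr rfl (fun y _ => hpair x y))
    _ = (∑ x, ∑ y, (1/2) * (m x * q x y * (Real.exp (α * v x) *
          (α * (v y - v x) * (1 - Real.exp (α * (v y - v x)))
            + α / 2 * (v y - v x) ^ 2 * (1 + Real.exp (α * (v y - v x)))))))
        + ∑ x, ∑ y, B x y := by
        rw [← Finset.sum_add_distrib]
        exact Finset.sum_congr rfl (fun x _ => by rw [Finset.sum_add_distrib])
    _ = (1/2) * ∑ x, ∑ y, m x * q x y * (Real.exp (α * v x) *
          (α * (v y - v x) * (1 - Real.exp (α * (v y - v x)))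
            + α / 2 * (v y - v x) ^ 2 * (1 + Real.exp (α * (v y - v x))))) := by
        rw [hBzero, add_zero, Finset.mul_sum]
        exact Finset.sum_congr rfl (fun x _ => by rw [Finset.mul_sum])

/-- ℓ¹-norm comparison under CD(0,∞) on a reversible graph: ‖e^{αu_t}‖₁ is nonincreasing
in t for α ≥ log 3 and nondecreasing for 0 < α ≤ 1. -/
theorem ell1_comparison_CD_zero_infty {V : Type*} [Fintype V] (q : V → V → ℝ)
    (hq : ∀ x y, 0 ≤ q x y) (hdiag : ∀ x, q x x = 0) (qmin : ℝ)
    (hqmin_pos : 0 < qmin) (hqmin : ∀ x y, 0 < q x y → qmin ≤ q x y)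
    (m : V → ℝ) (hm : ∀ x, 0 < m x)
    (hrev : ∀ x y, q x y * m x = q y x * m y)
    (hCD : ∀ f : V → ℝ, ∀ x, 0 ≤ gGammaTwo q f x)
    (u : ℝ → V → ℝ)
    (hu : ∀ t ∈ Set.Ici (0 : ℝ), ∀ x, HasDerivWithinAt (fun s => u s x)
      (glap q (u t) x + gGamma q (u t) x) (Set.Ici 0) t)
    (h0 : ∀ x, gGamma q (u 0) x ≤ qmin / 2) (α : ℝ) :
    (Real.log 3 ≤ α →
      AntitoneOn (fun t => ∑ x, Real.exp (α * u t x) * m x) (Set.Ici 0))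
    ∧ (0 < α → α ≤ 1 →
      MonotoneOn (fun t => ∑ x, Real.exp (α * u t x) * m x) (Set.Ici 0)) := by
  rcases isEmpty_or_nonempty V with hV | hV
  · have hzero : (fun t => ∑ x, Real.exp (α * u t x) * m x) = fun _ => (0:ℝ) := by
      funext t
      rw [Finset.univ_eq_empty, Finset.sum_empty]
    constructor
    · intro _
      rw [hzero]
      exact antitoneOn_const
    · intro _ _
      rw [hzero]
      exact monotoneOn_const
  · have hgam := gamma_le q hq hqmin_pos hqmin hCD u hu h0
    set N' : ℝ → ℝ := fun t => ∑ x, α * (glap q (u t) x + gGamma q (u t) x)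
        * Real.exp (α * u t x) * m x with hN'def
    have hN : ∀ t ∈ Set.Ici (0:ℝ), HasDerivWithinAt
        (fun s => ∑ x, Real.exp (α * u s x) * m x) (N' t) (Set.Ici 0) t := by
      intro t ht
      exact hasDeriv_ell1 q u m α (fun x => glap q (u t) x + gGamma q (u t) x) (hu t ht)
    have hcont : ContinuousOn (fun s => ∑ x, Real.exp (α * u s x) * m x) (Set.Ici 0) :=
      fun t ht => (hN t ht).continuousWithinAt
    have hDA : ∀ t ∈ Set.Ioi (0:ℝ), HasDerivAt
        (fun s => ∑ x, Real.exp (α * u s x) * m x) (N' t) t :=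
      fun t ht => (hN t (Set.mem_Ici.2 (le_of_lt ht))).hasDerivAt (Ici_mem_nhds ht)
    have hdiff : DifferentiableOn ℝ (fun s => ∑ x, Real.exp (α * u s x) * m x)
        (interior (Set.Ici (0:ℝ))) := by
      intro t ht
      rw [interior_Ici] at ht
      exact (hDA t ht).differentiableAt.differentiableWithinAt
    have hId : ∀ t : ℝ, N' t = (1/2) * ∑ x, ∑ y, m x * q x y * (Real.exp (α * u t x) *
        (α * (u t y - u t x) * (1 - Real.exp (α * (u t y - u t x)))
          + α / 2 * (u t y - u t x) ^ 2 * (1 + Real.exp (α * (u t y - u t x))))) :=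
      fun t => deriv_identity q m hrev α (u t)
    constructor
    · -- antitone for α ≥ log 3
      intro hα
      apply antitoneOn_of_deriv_nonpos (convex_Ici 0) hcont hdiff
      intro t ht
      rw [interior_Ici] at ht
      rw [(hDA t ht).deriv, hId t]
      have hterm : ∀ x ∈ (univ : Finset V), ∑ y, m x * q x y * (Real.exp (α * u t x) *
          (α * (u t y - u t x) * (1 - Real.exp (α * (u t y - u t x)))
            + α / 2 * (u t y - u t x) ^ 2 * (1 + Real.exp (α * (u t y - u t x))))) ≤ 0 := by
        intro x _
        refine Finset.sum_nonpos (fun y _ => ?_)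
        rcases eq_or_lt_of_le (hq x y) with h0q | hpos
        · rw [← h0q]
          simp
        · have hqy : qmin ≤ q x y := hqmin x y hpos
          have hd2 : (u t y - u t x) ^ 2 ≤ 1 := by
            have h1 := gGamma_term_le hq (u t) x y
            have h2 : gGamma q (u t) x ≤ qmin / 2 := hgam t (Set.mem_Ici.2 (le_of_lt ht)) x
            have h3 : q x y * (u t y - u t x) ^ 2 ≤ q x y * 1 := by
              rw [mul_one]
              linarith
            exact le_of_mul_le_mul_left h3 hpos
          have habs : |u t y - u t x| ≤ 1 := by
            nlinarith [abs_nonneg (u t y - u t x), sq_abs (u t y - u t x)]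
          have hh := lem2 hα habs
          have hmq : 0 ≤ m x * q x y := mul_nonneg (hm x).le (hq x y)
          have hEh : Real.exp (α * u t x) *
              (α * (u t y - u t x) * (1 - Real.exp (α * (u t y - u t x)))
                + α / 2 * (u t y - u t x) ^ 2
                  * (1 + Real.exp (α * (u t y - u t x)))) ≤ 0 :=
            mul_nonpos_of_nonneg_of_nonpos (Real.exp_pos _).le hh
          exact mul_nonpos_of_nonneg_of_nonpos hmq hEh
      have := Finset.sum_nonpos hterm
      linarith
    · -- monotone for 0 < α ≤ 1
      intro hα0 hα1
      apply monotoneOn_of_deriv_nonneg (convex_Ici 0) hcont hdiff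
      intro t ht
      rw [interior_Ici] at ht
      rw [(hDA t ht).deriv, hId t]
      have hterm : ∀ x ∈ (univ : Finset V), 0 ≤ ∑ y, m x * q x y * (Real.exp (α * u t x) *
          (α * (u t y - u t x) * (1 - Real.exp (α * (u t y - u t x)))
            + α / 2 * (u t y - u t x) ^ 2 * (1 + Real.exp (α * (u t y - u t x))))) := by
        intro x _
        refine Finset.sum_nonneg (fun y _ => ?_)
        have hh := lem1 (d := u t y - u t x) hα0 hα1
        have hmq : 0 ≤ m x * q x y := mul_nonneg (hm x).le (hq x y)
        exact mul_nonneg hmq (mul_nonneg (Real.exp_pos _).le hh)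
      have := Finset.sum_nonneg hterm
      linarith
end
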